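/- arXiv:1109.5998 — 2 statements merged into one kernel-verified Lean document; each statement's English description precedes it below -/
import Mathlib

section
/- Let f be a probability density on ℝ^d supported in [0,1]^d that is twice continuously differentiable, with all first partial derivatives bounded in absolute value by L and all second partial derivatives bounded in absolute value by M. Let f̂ be the histogram estimator with bandwidth h = 1/N (N a positive integer) on the regular grid of cubes of side h partitioning [0,1]^d, built from a sample with common density f. Then the bias satisfies ∫|E f̂ − f| ≤ (L d h)/2 + (M d² h²)/4; in particular ∫|E f̂ − f| = O(dh) + O(d²h²). -/
/-!
On a grid cell `B` of side `h`, the mean value inequality gives `|f y - f x| ≤ L ∑ᵢ |yᵢ - xᵢ|`,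
and for `x ∈ B` the mean of `|yᵢ - xᵢ|` over `y ∈ B` is at most `h / 2`; hence
`|h⁻ᵈ ∫_B f - f x| ≤ L d h / 2` for every `x`. By continuity `f` also vanishes where a coordinate
equals `0` or `1`, and since `1/h = N` is an integer a cell meeting `(0,1)ᵈ` lies in `[0,1)ᵈ`.
So the bias vanishes off this unit cube, and its integral is at most `L d h / 2`.
-/

open MeasureTheory Real Filter
open scoped ENNReal Topology

noncomputable section

/-- Histogram estimator with bandwidth `h` built from the points `z 0, …, z (N-1)` in `ℝ^k`:
`f̂(x) = (N h^k)⁻¹ Σᵢ 1{zᵢ ∈ B(x)}` where `B(x)` is the grid cube of side `h` containing `x`. -/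
def histo {k : ℕ} (h : ℝ) {N : ℕ} (z : Fin N → Fin k → ℝ) (x : Fin k → ℝ) : ℝ :=
  ((N : ℝ) * h ^ k)⁻¹ *
    ∑ i : Fin N, if ∀ j, ⌊z i j / h⌋ = ⌊x j / h⌋ then (1 : ℝ) else 0

section

variable {d : ℕ}

theorem abs_apply_le_mul_sum_abs (φ : (Fin d → ℝ) →L[ℝ] ℝ) {L : ℝ}
    (hφ : ∀ i, |φ (Pi.single i 1)| ≤ L) (v : Fin d → ℝ) :
    |φ v| ≤ L * ∑ i, |v i| := by
  classical
  calc |φ v| = |∑ i, v i * φ (Pi.single i 1)| := by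
        conv_lhs => rw [pi_eq_sum_univ' v]
        simp [map_sum]
    _ ≤ ∑ i, |v i| * L := by
        refine (Finset.abs_sum_le_sum_abs _ _).trans (Finset.sum_le_sum fun i _ => ?_)
        rw [abs_mul]
        exact mul_le_mul_of_nonneg_left (hφ i) (abs_nonneg _)
    _ = L * ∑ i, |v i| := by rw [← Finset.sum_mul, mul_comm]

theorem abs_sub_le_mul_sum_abs_sub {f : (Fin d → ℝ) → ℝ} (hf : Differentiable ℝ f)
    {L : ℝ} (hL : ∀ z i, |fderiv ℝ f z (Pi.single i 1)| ≤ L) (x y : Fin d → ℝ) :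
    |f y - f x| ≤ L * ∑ i, |y i - x i| := by
  have hline : ∀ t : ℝ, HasDerivAt (fun s : ℝ => f (x + s • (y - x)))
      (fderiv ℝ f (x + t • (y - x)) (y - x)) t := by
    intro t
    have hpath : HasDerivAt (fun s : ℝ => x + s • (y - x)) (y - x) t := by
      simpa using ((hasDerivAt_id t).smul_const (y - x)).const_add x
    exact (hf _).hasFDerivAt.comp_hasDerivAt t hpath
  simpa using norm_image_sub_le_of_norm_deriv_le_segment_01'
    (fun t _ => (hline t).hasDerivWithinAt) fun t _ => abs_apply_le_mul_sum_abs _ (hL _) (y - x)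

theorem eq_zero_of_exists_notMem_Ioo {f : (Fin d → ℝ) → ℝ} (hf : Continuous f)
    (hsupp : ∀ x : Fin d → ℝ, (∃ i, x i < 0 ∨ 1 < x i) → f x = 0)
    {x : Fin d → ℝ} {i : Fin d} (hx : x i ∉ Set.Ioo 0 1) : f x = 0 := by
  classical
  set g : ℝ → ℝ := fun t => f (Function.update x i t)
  have hg : Set.EqOn g 0 (Set.Icc 0 1)ᶜ := fun t ht => by
    refine hsupp _ ⟨i, ?_⟩
    rw [Function.update_self]
    rwa [Set.mem_compl_iff, Set.mem_Icc, not_and_or, not_le, not_le] at ht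
  have hclosure : x i ∈ closure (Set.Icc (0 : ℝ) 1)ᶜ := by
    rwa [closure_compl, interior_Icc]
  simpa [g] using hg.closure (by fun_prop) continuous_const hclosure

def cube (a : Fin d → ℝ) (h : ℝ) : Set (Fin d → ℝ) :=
  Set.univ.pi fun i => Set.Ico (a i) (a i + h)

theorem volume_cube (a : Fin d → ℝ) {h : ℝ} (hh : 0 ≤ h) :
    volume (cube a h) = ENNReal.ofReal (h ^ d) := by
  simp [cube, volume_pi_pi, Real.volume_Ico, ENNReal.ofReal_pow hh]

theorem Continuous.integrableOn_cube {f : (Fin d → ℝ) → ℝ} (hf : Continuous f)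
    (a : Fin d → ℝ) (h : ℝ) : IntegrableOn f (cube a h) :=
  (hf.continuousOn.integrableOn_compact (isCompact_univ_pi fun _ => isCompact_Icc)).mono_set
    (Set.pi_mono fun _ _ => Set.Ico_subset_Icc_self)

theorem setIntegral_cube_comp_eval (a : Fin d → ℝ) {h : ℝ} (hh : 0 ≤ h) (i : Fin d)
    (g : ℝ → ℝ) :
    ∫ y in cube a h, g (y i) = h ^ (d - 1) * ∫ t in Set.Ico (a i) (a i + h), g t := by
  classical
  let G : Fin d → ℝ → ℝ := Function.update (fun _ _ => 1) i g
  have hG : ∀ y : Fin d → ℝ, g (y i) = ∏ j, G j (y j) := fun y => by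
    rw [Fintype.prod_eq_single i fun j hj => by simp [G, hj]]
    simp [G]
  have hfactor : ∀ j, ∫ t in Set.Ico (a j) (a j + h), G j t =
      Function.update (fun _ => h) i (∫ t in Set.Ico (a i) (a i + h), g t) j := by
    intro j
    rcases eq_or_ne j i with rfl | hj
    · simp [G]
    · simp [G, hj, hh]
  simp_rw [hG]
  rw [cube, volume_pi, Measure.restrict_pi_pi, integral_fintype_prod_eq_prod]
  simp_rw [hfactor]
  rw [Finset.prod_update_of_mem (Finset.mem_univ i), Finset.prod_const, mul_comm]
  simp [Finset.card_sdiff]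

theorem setIntegral_Ico_abs_sub_le {a b x : ℝ} (hx : x ∈ Set.Icc a b) :
    ∫ t in Set.Ico a b, |t - x| ≤ (b - a) ^ 2 / 2 := by
  obtain ⟨hax, hxb⟩ := hx
  have hint : ∀ u v, IntervalIntegrable (fun t => |t - x|) volume u v := fun u v =>
    (by fun_prop : Continuous fun t => |t - x|).intervalIntegrable u v
  have hleft : ∫ t in a..x, |t - x| = (x - a) ^ 2 / 2 := by
    rw [intervalIntegral.integral_congr (g := fun t => x - t) fun t ht => by
      rw [Set.uIcc_of_le hax] at ht; simp [abs_of_nonpos (sub_nonpos.mpr ht.2)]]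
    simp [intervalIntegral.integral_comp_sub_left (fun t => t), integral_id]
  have hright : ∫ t in x..b, |t - x| = (b - x) ^ 2 / 2 := by
    rw [intervalIntegral.integral_congr (g := fun t => t - x) fun t ht => by
      rw [Set.uIcc_of_le hxb] at ht; simp [abs_of_nonneg (sub_nonneg.mpr ht.1)]]
    simp [intervalIntegral.integral_comp_sub_right (fun t => t), integral_id]
  rw [setIntegral_congr_set Ico_ae_eq_Ioc, ← intervalIntegral.integral_of_le (hax.trans hxb),
    ← intervalIntegral.integral_add_adjacent_intervals (hint a x) (hint x b), hleft, hright]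
  nlinarith [mul_nonneg (sub_nonneg.mpr hax) (sub_nonneg.mpr hxb)]

theorem setIntegral_cube_abs_sub_le {a x : Fin d → ℝ} {h : ℝ} (hh : 0 ≤ h) (hx : x ∈ cube a h)
    (i : Fin d) : ∫ y in cube a h, |y i - x i| ≤ h ^ d * h / 2 := by
  rw [setIntegral_cube_comp_eval a hh i fun t => |t - x i|]
  calc h ^ (d - 1) * ∫ t in Set.Ico (a i) (a i + h), |t - x i|
      ≤ h ^ (d - 1) * ((a i + h - a i) ^ 2 / 2) := by
        gcongr
        exact setIntegral_Ico_abs_sub_le (Set.Ico_subset_Icc_self (hx i trivial))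
    _ = h ^ d * h / 2 := by
        rw [← pow_sub_one_mul (Fin.pos i).ne']
        ring

theorem abs_inv_mul_setIntegral_cube_sub_le {f : (Fin d → ℝ) → ℝ} (hf : Continuous f)
    {a x : Fin d → ℝ} {h L : ℝ} (hh : 0 < h) (hL : 0 ≤ L) (hx : x ∈ cube a h)
    (hlip : ∀ y, |f y - f x| ≤ L * ∑ i, |y i - x i|) :
    |(h ^ d)⁻¹ * (∫ y in cube a h, f y) - f x| ≤ L * d * h / 2 := by
  have hhd : 0 < h ^ d := pow_pos hh d
  have hvol : volume.real (cube a h) = h ^ d := by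
    rw [measureReal_def, volume_cube a hh.le, ENNReal.toReal_ofReal hhd.le]
  have hint : ∀ g : (Fin d → ℝ) → ℝ, Continuous g → Integrable g (volume.restrict (cube a h)) :=
    fun g hg => hg.integrableOn_cube a h
  calc |(h ^ d)⁻¹ * (∫ y in cube a h, f y) - f x|
      = (h ^ d)⁻¹ * |∫ y in cube a h, (f y - f x)| := by
        rw [integral_sub (hint f hf) (hint _ continuous_const), setIntegral_const, hvol,
          smul_eq_mul, ← abs_of_pos (inv_pos.mpr hhd), ← abs_mul, abs_of_pos (inv_pos.mpr hhd)]
        congr 1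
        field_simp
    _ ≤ (h ^ d)⁻¹ * ∫ y in cube a h, L * ∑ i, |y i - x i| := by
        gcongr
        exact norm_integral_le_of_norm_le (f := fun y => f y - f x)
          (g := fun y => L * ∑ i, |y i - x i|) (hint _ (by fun_prop)) (ae_of_all _ hlip)
    _ = (h ^ d)⁻¹ * (L * ∑ i, ∫ y in cube a h, |y i - x i|) := by
        rw [integral_const_mul, integral_finsetSum _ fun i _ => hint _ (by fun_prop)]
    _ ≤ (h ^ d)⁻¹ * (L * ∑ _i : Fin d, h ^ d * h / 2) := by
        gcongr with i
        exact setIntegral_cube_abs_sub_le hh.le hx i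
    _ = L * d * h / 2 := by
        simp only [Finset.sum_const, Finset.card_univ, Fintype.card_fin, nsmul_eq_mul]
        field_simp

theorem setOf_floor_div_eq_cube {h : ℝ} (hh : 0 < h) (x : Fin d → ℝ) :
    {y : Fin d → ℝ | ∀ i, ⌊y i / h⌋ = ⌊x i / h⌋} = cube (fun i => ⌊x i / h⌋ * h) h := by
  ext y
  simp only [Set.mem_ofPred_eq, cube, Set.mem_univ_pi, Set.mem_Ico, Int.floor_eq_iff,
    le_div_iff₀ hh, div_lt_iff₀ hh, add_mul, one_mul]

theorem mem_cube_floor {h : ℝ} (hh : 0 < h) (x : Fin d → ℝ) :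
    x ∈ cube (fun i => ⌊x i / h⌋ * h) h := by
  rw [← setOf_floor_div_eq_cube hh]
  exact fun _ => rfl

theorem mem_Ico_of_floor_div_inv_eq {N : ℕ} (hN : 0 < N) {s t : ℝ}
    (hst : ⌊s / (N : ℝ)⁻¹⌋ = ⌊t / (N : ℝ)⁻¹⌋) (hs : s ∈ Set.Ico 0 1) : t ∈ Set.Ico 0 1 := by
  have hNR : (0 : ℝ) < N := by exact_mod_cast hN
  rw [div_inv_eq_mul, div_inv_eq_mul] at hst
  obtain ⟨hs0, hs1⟩ := hs
  have ht0 : 0 ≤ ⌊t * N⌋ := hst ▸ Int.floor_nonneg.mpr (by positivity)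
  have ht1 : ⌊t * N⌋ < N := hst ▸ Int.floor_lt.mpr (by push_cast; nlinarith)
  have ht0' := Int.floor_nonneg.mp ht0
  have ht1' := Int.floor_lt.mp ht1
  push_cast at ht1'
  constructor <;> nlinarith

end

theorem histogram_bias_bound_general
    (d N : ℕ) (hd : 0 < d) (hN : 0 < N) (L M : ℝ)
    (f : (Fin d → ℝ) → ℝ)
    (hsmooth : ContDiff ℝ 2 f)
    (hsupp : ∀ x : Fin d → ℝ, (∃ i, x i < 0 ∨ 1 < x i) → f x = 0)
    (hL : ∀ (x : Fin d → ℝ) (i : Fin d), |fderiv ℝ f x (Pi.single i 1)| ≤ L)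
    (hM : ∀ (x : Fin d → ℝ) (i j : Fin d),
      |fderiv ℝ (fun y => fderiv ℝ f y (Pi.single i 1)) x (Pi.single j 1)| ≤ M) :
    ∫ x : Fin d → ℝ,
        |((N : ℝ) ^ d) *
            (∫ y in {y : Fin d → ℝ | ∀ i, ⌊y i / ((N : ℝ)⁻¹)⌋ = ⌊x i / ((N : ℝ)⁻¹)⌋}, f y)
          - f x| ≤
      L * d * (N : ℝ)⁻¹ / 2 + M * (d : ℝ) ^ 2 * ((N : ℝ)⁻¹) ^ 2 / 4 := by
  set h : ℝ := (N : ℝ)⁻¹ with h_def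
  have hh : 0 < h := inv_pos.mpr (Nat.cast_pos.mpr hN)
  have hL0 : 0 ≤ L := (abs_nonneg _).trans (hL 0 ⟨0, hd⟩)
  have hM0 : 0 ≤ M := (abs_nonneg _).trans (hM 0 ⟨0, hd⟩ ⟨0, hd⟩)
  set cell : (Fin d → ℝ) → Set (Fin d → ℝ) := fun x => {y | ∀ i, ⌊y i / h⌋ = ⌊x i / h⌋}
  set bias : (Fin d → ℝ) → ℝ := fun x => (N : ℝ) ^ d * (∫ y in cell x, f y) - f x
  have hpointwise : ∀ x, |bias x| ≤ L * d * h / 2 := fun x => by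
    rw [show bias x = (h ^ d)⁻¹ * (∫ y in cell x, f y) - f x by simp [bias, h_def],
      show cell x = _ from setOf_floor_div_eq_cube hh x]
    exact abs_inv_mul_setIntegral_cube_sub_le hsmooth.continuous hh hL0 (mem_cube_floor hh x)
      (abs_sub_le_mul_sum_abs_sub (hsmooth.differentiable two_ne_zero) hL x)
  have hvanish : ∀ x ∉ cube 0 1, |bias x| = 0 := fun x hx => by
    obtain ⟨i, hi⟩ : ∃ i, x i ∉ Set.Ico 0 1 := by simpa [cube, Set.mem_pi] using hx
    have hzero : ∀ y ∈ cell x, f y = 0 := fun y hy =>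
      eq_zero_of_exists_notMem_Ioo hsmooth.continuous hsupp fun hyi =>
        hi (mem_Ico_of_floor_div_inv_eq hN (hy i) (Set.Ioo_subset_Ico_self hyi))
    simp [bias, setIntegral_eq_zero_of_forall_eq_zero hzero, hzero x fun _ => rfl]
  have hunit : volume (cube (0 : Fin d → ℝ) 1) = 1 := by
    rw [volume_cube 0 zero_le_one, one_pow, ENNReal.ofReal_one]
  calc ∫ x, |bias x| = ∫ x in cube 0 1, |bias x| :=
        (setIntegral_eq_integral_of_forall_compl_eq_zero hvanish).symm
    _ ≤ L * d * h / 2 * volume.real (cube (0 : Fin d → ℝ) 1) :=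
        (le_abs_self _).trans <| norm_setIntegral_le_of_norm_le_const (f := fun x => |bias x|)
          (hunit ▸ ENNReal.one_lt_top) fun x _ => (abs_abs (bias x)).trans_le (hpointwise x)
    _ ≤ L * d * h / 2 + M * (d : ℝ) ^ 2 * h ^ 2 / 4 := by
        rw [measureReal_def, hunit, ENNReal.toReal_one, mul_one]
        linarith [show 0 ≤ M * (d : ℝ) ^ 2 * h ^ 2 / 4 by positivity]

/-- **Lemma (bias of the histogram).** For a twice continuously differentiable density `f` on
`ℝ^d` supported in `[0,1]^d`, with first partials bounded by `L` and second partials bounded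
by `M`, the histogram with bandwidth `h = 1/N` has pointwise expectation
`E f̂(x) = p_{B(x)}/h^d` (with `B(x)` the grid cube containing `x`), and its bias satisfies
`∫|E f̂ − f| ≤ L d h / 2 + M d² h² / 4`. -/
theorem histogram_bias_bound
    (d N : ℕ) (hd : 0 < d) (hN : 0 < N) (L M : ℝ)
    (f : (Fin d → ℝ) → ℝ)
    (hsmooth : ContDiff ℝ 2 f)
    (hf0 : ∀ x, 0 ≤ f x) (hf1 : ∫ x, f x = 1)
    (hsupp : ∀ x : Fin d → ℝ, (∃ i, x i < 0 ∨ 1 < x i) → f x = 0)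
    (hL : ∀ (x : Fin d → ℝ) (i : Fin d), |fderiv ℝ f x (Pi.single i 1)| ≤ L)
    (hM : ∀ (x : Fin d → ℝ) (i j : Fin d),
      |fderiv ℝ (fun y => fderiv ℝ f y (Pi.single i 1)) x (Pi.single j 1)| ≤ M) :
    ∫ x : Fin d → ℝ,
        |((N : ℝ) ^ d) *
            (∫ y in {y : Fin d → ℝ | ∀ i, ⌊y i / ((N : ℝ)⁻¹)⌋ = ⌊x i / ((N : ℝ)⁻¹)⌋}, f y)
          - f x| ≤
      L * d * (N : ℝ)⁻¹ / 2 + M * (d : ℝ) ^ 2 * ((N : ℝ)⁻¹) ^ 2 / 4 :=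
  histogram_bias_bound_general d N hd hN L M f hsmooth hsupp hL hM
end
end

section
/- Let f be a probability density on ℝ^k and let f̂ and f̂' be histogram estimators with the same bandwidth h and the same grid, built respectively from sample points (z_1,…,z_N) and (z'_1,…,z'_N) in ℝ^k that differ in exactly one point (z_i = z'_i for all i ≠ j). Then ∫|f̂ − f̂'| ≤ 2/N, and consequently the L¹ loss g(z_1,…,z_N) = ∫|f̂ − f| satisfies the bounded-differences condition |g(z_1,…,z_N) − g(z'_1,…,z'_N)| ≤ 2/N. -/
/-!
Histograms built from samples that differ only in the `j`-th point differ by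
`(N h^k)⁻¹ (1_A - 1_B)`, where `A` and `B` are the grid cells of the two `j`-th points.
Each cell has volume `h^k`, so the `L¹` distance of the histograms is at most `2/N`.
The bound for the `L¹` losses then follows from the reverse triangle inequality
`| |a| - |b| | ≤ |a - b|` integrated pointwise.
-/

open MeasureTheory Real Filter
open scoped ENNReal Topology

noncomputable section

theorem abs_integral_norm_sub_integral_norm_le {α E : Type*} [MeasurableSpace α]
    {μ : Measure α} [NormedAddCommGroup E] {F G : α → E}
    (hF : Integrable F μ) (hG : Integrable G μ) :
    |∫ x, ‖F x‖ ∂μ - ∫ x, ‖G x‖ ∂μ| ≤ ∫ x, ‖F x - G x‖ ∂μ := by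
  rw [← integral_sub hF.norm hG.norm]
  calc |∫ x, (‖F x‖ - ‖G x‖) ∂μ| ≤ ∫ x, |‖F x‖ - ‖G x‖| ∂μ := abs_integral_le_integral_abs
    _ ≤ ∫ x, ‖F x - G x‖ ∂μ :=
      integral_mono_of_nonneg (.of_forall fun _ => abs_nonneg _) (hF.sub hG).norm
        (.of_forall fun x => abs_norm_sub_norm_le (F x) (G x))

theorem integral_abs_indicator_one_sub_indicator_one_le {α : Type*} [MeasurableSpace α]
    {μ : Measure α} {A B : Set α} (hA : MeasurableSet A) (hB : MeasurableSet B)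
    (hAμ : μ A ≠ ⊤) (hBμ : μ B ≠ ⊤) :
    ∫ x, |A.indicator 1 x - B.indicator 1 x| ∂μ ≤ μ.real A + μ.real B := by
  have hAi : Integrable (A.indicator (1 : α → ℝ)) μ :=
    (integrable_indicator_iff hA).2 (integrableOn_const hAμ)
  have hBi : Integrable (B.indicator (1 : α → ℝ)) μ :=
    (integrable_indicator_iff hB).2 (integrableOn_const hBμ)
  calc ∫ x, |A.indicator 1 x - B.indicator 1 x| ∂μ
      ≤ ∫ x, (A.indicator (1 : α → ℝ) x + B.indicator 1 x) ∂μ := by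
        refine integral_mono_of_nonneg (.of_forall fun _ => abs_nonneg _) (hAi.add hBi)
          (.of_forall fun x => ?_)
        have h1 : ∀ s : Set α, 0 ≤ s.indicator (1 : α → ℝ) x :=
          fun s => Set.indicator_nonneg (fun _ _ => zero_le_one) x
        exact (abs_sub _ _).trans_eq <| by rw [abs_of_nonneg (h1 A), abs_of_nonneg (h1 B)]
    _ = μ.real A + μ.real B := by
        rw [integral_add hAi hBi, integral_indicator_one hA, integral_indicator_one hB]

def gridCell {k : ℕ} (h : ℝ) (w : Fin k → ℝ) : Set (Fin k → ℝ) :=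
  {x | ∀ j, ⌊w j / h⌋ = ⌊x j / h⌋}

section gridCell

variable {k : ℕ} {h : ℝ}

theorem gridCell_eq_pi (hh : 0 < h) (w : Fin k → ℝ) :
    gridCell h w = Set.univ.pi fun j => Set.Ico (⌊w j / h⌋ * h) ((⌊w j / h⌋ + 1) * h) := by
  ext x
  simp only [gridCell, Set.mem_ofPred_eq, Set.mem_univ_pi, Set.mem_Ico]
  refine forall_congr' fun j => ?_
  rw [eq_comm, Int.floor_eq_iff, le_div_iff₀ hh, div_lt_iff₀ hh]

theorem measurableSet_gridCell (hh : 0 < h) (w : Fin k → ℝ) : MeasurableSet (gridCell h w) := by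
  rw [gridCell_eq_pi hh]
  exact .univ_pi fun _ => measurableSet_Ico

theorem volume_gridCell (hh : 0 < h) (w : Fin k → ℝ) :
    volume (gridCell h w) = ENNReal.ofReal h ^ k := by
  simp only [gridCell_eq_pi hh, volume_pi_pi, Real.volume_Ico, add_mul, one_mul,
    add_sub_cancel_left, Finset.prod_const, Finset.card_univ, Fintype.card_fin]

theorem measureReal_gridCell (hh : 0 < h) (w : Fin k → ℝ) :
    volume.real (gridCell h w) = h ^ k := by
  rw [measureReal_def, volume_gridCell hh, ENNReal.toReal_pow, ENNReal.toReal_ofReal hh.le]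

end gridCell

theorem histo_eq_smul_sum_indicator {k N : ℕ} (h : ℝ) (z : Fin N → Fin k → ℝ) :
    histo h z = ((N : ℝ) * h ^ k)⁻¹ • ∑ i, (gridCell h (z i)).indicator 1 := by
  ext x
  simp [histo, Set.indicator_apply, gridCell]

theorem integrable_histo {k N : ℕ} {h : ℝ} (hh : 0 < h) (z : Fin N → Fin k → ℝ) :
    Integrable (histo h z) := by
  rw [histo_eq_smul_sum_indicator]
  refine (integrable_finsetSum' _ fun i _ => ?_).smul _
  exact (integrable_indicator_iff (measurableSet_gridCell hh _)).2
    (integrableOn_const (by simp [volume_gridCell hh]))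

theorem histo_sub_histo_of_eq_off {k N : ℕ} (h : ℝ) {z z' : Fin N → Fin k → ℝ} {j : Fin N}
    (hdiff : ∀ i, i ≠ j → z i = z' i) :
    histo h z - histo h z' = ((N : ℝ) * h ^ k)⁻¹ •
      ((gridCell h (z j)).indicator 1 - (gridCell h (z' j)).indicator 1) := by
  rw [histo_eq_smul_sum_indicator, histo_eq_smul_sum_indicator, ← smul_sub,
    ← Finset.sum_sub_distrib, Finset.sum_eq_single j (fun i _ hij => by rw [hdiff i hij, sub_self])
      (fun hj => absurd (Finset.mem_univ j) hj)]

theorem integral_abs_histo_sub_histo_le {k N : ℕ} {h : ℝ} (hh : 0 < h)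
    {z z' : Fin N → Fin k → ℝ} {j : Fin N} (hdiff : ∀ i, i ≠ j → z i = z' i) :
    ∫ x, |histo h z x - histo h z' x| ≤ 2 / N := by
  have hN : (N : ℝ) ≠ 0 := Nat.cast_ne_zero.2 j.pos.ne'
  have hcell : ∀ w : Fin k → ℝ, volume (gridCell h w) ≠ ⊤ := fun w => by simp [volume_gridCell hh]
  simp_rw [← Pi.sub_apply (histo h z), histo_sub_histo_of_eq_off h hdiff, Pi.smul_apply,
    smul_eq_mul, abs_mul, integral_const_mul]
  calc |((N : ℝ) * h ^ k)⁻¹| * ∫ x, |((gridCell h (z j)).indicator 1 -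
        (gridCell h (z' j)).indicator 1 : _ → ℝ) x|
      ≤ |((N : ℝ) * h ^ k)⁻¹| * (h ^ k + h ^ k) := by
        gcongr
        simpa only [Pi.sub_apply, measureReal_gridCell hh] using
          integral_abs_indicator_one_sub_indicator_one_le (measurableSet_gridCell hh _)
            (measurableSet_gridCell hh _) (hcell _) (hcell _)
    _ = 2 / N := by
        rw [abs_of_pos (by positivity)]
        field_simp
        ring

theorem histogram_bounded_differences_general
    (k N : ℕ) (h : ℝ) (hh : 0 < h)
    (f : (Fin k → ℝ) → ℝ) (hf1 : ∫ x, f x = 1)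
    (z z' : Fin N → Fin k → ℝ) (j : Fin N)
    (hdiff : ∀ i, i ≠ j → z i = z' i) :
    (∫ x, |histo h z x - histo h z' x|) ≤ 2 / N ∧
    abs ((∫ x, |histo h z x - f x|) - ∫ x, |histo h z' x - f x|) ≤ 2 / N := by
  -- a non-integrable function has integral `0`
  have hf : Integrable f := .of_integral_ne_zero (by simp [hf1])
  have hdist := integral_abs_histo_sub_histo_le hh hdiff
  refine ⟨hdist, le_trans ?_ hdist⟩
  simpa only [Real.norm_eq_abs, Pi.sub_apply, sub_sub_sub_cancel_right] using
    abs_integral_norm_sub_integral_norm_le ((integrable_histo hh z).sub hf)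
      ((integrable_histo hh z').sub hf)

/-- **Lemma (bounded differences for the histogram L¹ loss).** Two histograms with the same
bandwidth and grid, built from samples differing in exactly one point, satisfy
`∫|f̂ − f̂'| ≤ 2/N`; hence the L¹ loss `g(z) = ∫|f̂ − f|` satisfies the bounded-differences
condition `|g(z) − g(z')| ≤ 2/N`. -/
theorem histogram_bounded_differences
    (k N : ℕ) (hN : 0 < N) (h : ℝ) (hh : 0 < h)
    (f : (Fin k → ℝ) → ℝ) (hf0 : ∀ x, 0 ≤ f x) (hf1 : ∫ x, f x = 1)
    (z z' : Fin N → Fin k → ℝ) (j : Fin N)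
    (hdiff : ∀ i, i ≠ j → z i = z' i) :
    (∫ x, |histo h z x - histo h z' x|) ≤ 2 / N ∧
    abs ((∫ x, |histo h z x - f x|) - ∫ x, |histo h z' x - f x|) ≤ 2 / N :=
  histogram_bounded_differences_general k N h hh f hf1 z z' j hdiff
end
end
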